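/- Let U be a unitary operator of class C¹(A) that is weakly propagating with respect to A, meaning the bounded operator U*AU − A is non-negative and injective. Then U has no eigenvalues, i.e. its point spectrum is empty. -/

import Mathlib

/-!
If `Uφ = cφ` with `φ ≠ 0`, then `|c| = 1` and `U*φ = c̄φ`, so formally
`⟪φ, U'φ⟫ = ⟪Aφ, Uφ⟫ - ⟪φ, UAφ⟫ = c⟪Aφ, φ⟫ - c⟪φ, Aφ⟫ = 0` (the virial theorem).
Since `φ` need not lie in `D(A)`, this is done on the regularizations
`a = (1 - iτA)⁻¹φ` and `b = (1 + iτA)⁻¹φ`, which exist because `A` is self-adjoint: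
for them `⟪a, U'b⟫ = 0` exactly, and `a, b → φ` as `τ → 0`.
Then `⟪φ, U*U'φ⟫ = c̄⟪φ, U'φ⟫ = 0`, so `U*U'φ = 0` by positivity and `φ = 0` by injectivity.
-/

open scoped ComplexInnerProductSpace
open ContinuousLinearMap

noncomputable section

variable {H : Type*} [NormedAddCommGroup H] [InnerProductSpace ℂ H] [CompleteSpace H]

/-- A bounded operator `B` is of class `C¹(A)` with commutator `ad_A(B) = B'` if the
sesquilinear form `(φ, ψ) ↦ ⟪Aφ, Bψ⟫ - ⟪φ, B(Aψ)⟫` on `D(A) × D(A)` is represented by the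
bounded operator `B'`. -/
def HasCommutator (A : H →ₗ.[ℂ] H) (B B' : H →L[ℂ] H) : Prop :=
  ∀ φ ψ : A.domain, ⟪A φ, B ψ⟫ - ⟪(φ : H), B (A ψ)⟫ = ⟪(φ : H), B' ψ⟫

/-- A unitary operator on a Hilbert space. -/
def IsUnitaryCLM (U : H →L[ℂ] H) : Prop :=
  adjoint U ∘L U = 1 ∧ U ∘L adjoint U = 1

open Filter Topology

namespace LinearPMap

section Symmetric

variable {E : Type*} [NormedAddCommGroup E] [InnerProductSpace ℂ E] (A : E →ₗ.[ℂ] E)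

def oneAddIMul (τ : ℝ) : A.domain →ₗ[ℂ] E :=
  A.domain.subtype + (Complex.I * τ) • A.toFun

@[simp]
lemma oneAddIMul_apply (τ : ℝ) (x : A.domain) :
    A.oneAddIMul τ x = (x : E) + (Complex.I * τ) • A x :=
  rfl

variable {A}

namespace IsFormalAdjoint

lemma re_inner_I_mul_smul_map_self (hA : A.IsFormalAdjoint A) (τ : ℝ) (x : A.domain) :
    (⟪(x : E), (Complex.I * τ) • A x⟫).re = 0 := by
  have him : (⟪(x : E), A x⟫).im = 0 := by
    rw [← Complex.conj_eq_iff_im, inner_conj_symm]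
    exact hA x x
  simp [Complex.mul_re, him]

lemma re_inner_oneAddIMul_self (hA : A.IsFormalAdjoint A) (τ : ℝ) (x : A.domain) :
    (⟪(x : E), A.oneAddIMul τ x⟫).re = ‖(x : E)‖ ^ 2 := by
  rw [oneAddIMul_apply, inner_add_right, Complex.add_re, hA.re_inner_I_mul_smul_map_self,
    add_zero, inner_self_eq_norm_sq_to_K]
  norm_cast

lemma norm_oneAddIMul_sq (hA : A.IsFormalAdjoint A) (τ : ℝ) (x : A.domain) :
    ‖A.oneAddIMul τ x‖ ^ 2 = ‖(x : E)‖ ^ 2 + τ ^ 2 * ‖A x‖ ^ 2 := by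
  rw [oneAddIMul_apply, norm_add_sq (𝕜 := ℂ), RCLike.re_to_complex,
    hA.re_inner_I_mul_smul_map_self, norm_smul]
  simp [mul_pow]

lemma norm_le_norm_oneAddIMul (hA : A.IsFormalAdjoint A) (τ : ℝ) (x : A.domain) :
    ‖(x : E)‖ ≤ ‖A.oneAddIMul τ x‖ := by
  refine le_of_sq_le_sq ?_ (norm_nonneg _)
  rw [hA.norm_oneAddIMul_sq]
  exact le_add_of_nonneg_right (by positivity)

lemma abs_mul_norm_map_le_norm_oneAddIMul (hA : A.IsFormalAdjoint A) (τ : ℝ) (x : A.domain) :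
    |τ| * ‖A x‖ ≤ ‖A.oneAddIMul τ x‖ := by
  refine le_of_sq_le_sq ?_ (norm_nonneg _)
  rw [mul_pow, sq_abs, hA.norm_oneAddIMul_sq]
  exact le_add_of_nonneg_left (by positivity)

lemma inner_oneAddIMul_neg_left (hA : A.IsFormalAdjoint A) (τ : ℝ) (x y : A.domain) :
    ⟪A.oneAddIMul (-τ) x, y⟫ = ⟪(x : E), A.oneAddIMul τ y⟫ := by
  simp only [oneAddIMul_apply, inner_add_left, inner_add_right, inner_smul_left, inner_smul_right,
    hA x y]
  simp

lemma dist_le_of_oneAddIMul_eq (hA : A.IsFormalAdjoint A) {τ : ℝ} {x : A.domain} {φ : E}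
    (hx : A.oneAddIMul τ x = φ) (ψ : A.domain) :
    dist (x : E) ψ ≤ dist φ ψ + |τ| * ‖A ψ‖ := by
  rw [dist_eq_norm, dist_eq_norm]
  calc ‖(x : E) - ψ‖ = ‖((x - ψ : A.domain) : E)‖ := rfl
    _ ≤ ‖A.oneAddIMul τ (x - ψ)‖ := hA.norm_le_norm_oneAddIMul τ _
    _ = ‖(φ - ψ) - (Complex.I * τ) • A ψ‖ := by
      rw [LinearMap.map_sub, hx, oneAddIMul_apply, sub_add_eq_sub_sub]
    _ ≤ ‖φ - ψ‖ + |τ| * ‖A ψ‖ := by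
      refine (norm_sub_le _ _).trans_eq ?_
      simp [norm_smul]

lemma tendsto_of_oneAddIMul_eq (hA : A.IsFormalAdjoint A) (hd : Dense (A.domain : Set E))
    {ι : Type*} {l : Filter ι} {τ : ι → ℝ} (hτ : Tendsto τ l (𝓝 0)) {x : ι → A.domain} {φ : E}
    (hx : ∀ i, A.oneAddIMul (τ i) (x i) = φ) :
    Tendsto (fun i ↦ (x i : E)) l (𝓝 φ) := by
  refine Metric.tendsto_nhds.mpr fun ε hε ↦ ?_
  obtain ⟨ψ, hψ, hψφ⟩ := hd.exists_dist_lt φ (by positivity : 0 < ε / 3)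
  have hsmall : ∀ᶠ i in l, |τ i| * ‖A ⟨ψ, hψ⟩‖ < ε / 3 := by
    refine (hτ.abs.mul_const _).eventually_lt_const ?_
    simpa using hε
  filter_upwards [hsmall] with i hi
  have hxψ := hA.dist_le_of_oneAddIMul_eq (hx i) ⟨ψ, hψ⟩
  linarith [dist_triangle (x i : E) ψ φ, dist_comm φ ψ]

end IsFormalAdjoint
end Symmetric

end LinearPMap

namespace IsSelfAdjoint

open LinearPMap

variable {A : H →ₗ.[ℂ] H}

lemma isFormalAdjoint (hA : IsSelfAdjoint A) : A.IsFormalAdjoint A := by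
  have hE : A† = A := hA
  intro x y
  have hx : (x : H) ∈ A†.domain := by rw [hE]; exact x.2
  rw [← (LinearPMap.ext_iff.mp hE).2 (hf := hx)]
  exact adjoint_isFormalAdjoint hA.dense_domain ⟨x, hx⟩ y

lemma exists_mem_domain_of_inner_eq (hA : IsSelfAdjoint A) {y z : H}
    (h : ∀ v : A.domain, ⟪z, (v : H)⟫ = ⟪y, A v⟫) :
    ∃ hy : y ∈ A.domain, A ⟨y, hy⟩ = z := by
  have hE : A† = A := hA
  have hy : y ∈ A†.domain := mem_adjoint_domain_of_exists y ⟨z, h⟩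
  refine ⟨by rwa [hE] at hy, ?_⟩
  rw [← (LinearPMap.ext_iff.mp hE).2 (hf := hy)]
  exact adjoint_apply_eq hA.dense_domain ⟨y, hy⟩ h

lemma isClosed_range_oneAddIMul (hA : IsSelfAdjoint A) {τ : ℝ} (hτ : τ ≠ 0) :
    IsClosed (LinearMap.range (A.oneAddIMul τ) : Set H) := by
  refine isClosed_of_closure_subset fun y hy ↦ ?_
  obtain ⟨u, hu, hlim⟩ := mem_closure_iff_seq_limit.mp hy
  choose x hx using hu
  have hsymm := hA.isFormalAdjoint
  have hdist := cauchySeq_iff_tendsto_dist_atTop_0.mp hlim.cauchySeq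
  have hcx : CauchySeq (fun n ↦ (x n : H)) := by
    refine cauchySeq_iff_tendsto_dist_atTop_0.mpr <|
      squeeze_zero (fun _ ↦ dist_nonneg) (fun p ↦ ?_) hdist
    rw [dist_eq_norm, dist_eq_norm, ← hx, ← hx, ← LinearMap.map_sub]
    exact hsymm.norm_le_norm_oneAddIMul τ (x p.1 - x p.2)
  have hcAx : CauchySeq (fun n ↦ A (x n)) := by
    refine cauchySeq_iff_tendsto_dist_atTop_0.mpr <|
      squeeze_zero (fun _ ↦ dist_nonneg) (fun p ↦ ?_) (by simpa using hdist.const_mul |τ|⁻¹)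
    rw [dist_eq_norm, dist_eq_norm, ← hx, ← hx, ← LinearMap.map_sub, ← LinearPMap.map_sub,
      le_inv_mul_iff₀ (abs_pos.mpr hτ)]
    exact hsymm.abs_mul_norm_map_le_norm_oneAddIMul τ (x p.1 - x p.2)
  obtain ⟨x₀, hx₀⟩ := cauchySeq_tendsto_of_complete hcx
  obtain ⟨z₀, hz₀⟩ := cauchySeq_tendsto_of_complete hcAx
  obtain ⟨hx₀A, hAx₀⟩ := hA.exists_mem_domain_of_inner_eq (y := x₀) (z := z₀) fun v ↦
    tendsto_nhds_unique ((hz₀.inner tendsto_const_nhds).congr fun n ↦ hsymm (x n) v)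
      (hx₀.inner tendsto_const_nhds)
  refine ⟨⟨x₀, hx₀A⟩, ?_⟩
  rw [oneAddIMul_apply, hAx₀]
  exact tendsto_nhds_unique ((hx₀.add (hz₀.const_smul _)).congr hx) hlim

lemma orthogonal_range_oneAddIMul (hA : IsSelfAdjoint A) {τ : ℝ} (hτ : τ ≠ 0) :
    (LinearMap.range (A.oneAddIMul τ))ᗮ = ⊥ := by
  refine (Submodule.eq_bot_iff _).mpr fun v hv ↦ ?_
  have hperp : ∀ x : A.domain, ⟪v, A.oneAddIMul τ x⟫ = 0 := fun x ↦
    (Submodule.mem_orthogonal' _ _).mp hv _ ⟨x, rfl⟩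
  obtain ⟨hvA, -⟩ := hA.exists_mem_domain_of_inner_eq (y := v) (z := (Complex.I * τ)⁻¹ • v)
    fun x ↦ by
      have hx := hperp x
      rw [oneAddIMul_apply, inner_add_right, inner_smul_right] at hx
      rw [inner_smul_left, map_inv₀, map_mul, Complex.conj_I, Complex.conj_ofReal,
        inv_mul_eq_iff_eq_mul₀ (by simpa using hτ)]
      linear_combination hx
  have hnorm := hA.isFormalAdjoint.re_inner_oneAddIMul_self τ ⟨v, hvA⟩
  rw [hperp, Complex.zero_re, eq_comm, sq_eq_zero_iff, norm_eq_zero] at hnorm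
  exact hnorm

lemma surjective_oneAddIMul (hA : IsSelfAdjoint A) {τ : ℝ} (hτ : τ ≠ 0) :
    Function.Surjective (A.oneAddIMul τ) := by
  have : CompleteSpace (LinearMap.range (A.oneAddIMul τ)) :=
    (hA.isClosed_range_oneAddIMul hτ).completeSpace_coe
  rw [← LinearMap.range_eq_top, ← Submodule.orthogonal_eq_bot_iff]
  exact hA.orthogonal_range_oneAddIMul hτ

end IsSelfAdjoint

namespace HasCommutator

variable {A : H →ₗ.[ℂ] H} {U U' : H →L[ℂ] H} {c : ℂ} {φ : H}

lemma inner_eq_zero_of_oneAddIMul_eq (hA : A.IsFormalAdjoint A) (hC : HasCommutator A U U')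
    (hUφ : U φ = c • φ) (hUstar : adjoint U φ = starRingEnd ℂ c • φ) {τ : ℝ} (hτ : τ ≠ 0)
    {a b : A.domain} (ha : A.oneAddIMul (-τ) a = φ) (hb : A.oneAddIMul τ b = φ) :
    ⟪(a : H), U' b⟫ = 0 := by
  have hab : ⟪φ, (b : H)⟫ = ⟪(a : H), φ⟫ := by
    simpa only [ha, hb] using hA.inner_oneAddIMul_neg_left τ a b
  have ha' : ⟪(a : H), U b⟫ = ⟪φ, U b⟫ - Complex.I * τ * ⟪A a, U b⟫ := by
    rw [← ha]
    simp [inner_smul_left]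
  have hb' : ⟪(a : H), U φ⟫ = ⟪(a : H), U b⟫ + Complex.I * τ * ⟪(a : H), U (A b)⟫ := by
    rw [← hb, LinearPMap.oneAddIMul_apply, map_add, map_smul, inner_add_right, inner_smul_right]
  have hφb : ⟪φ, U b⟫ = c * ⟪φ, (b : H)⟫ := by
    rw [← adjoint_inner_left, hUstar, inner_smul_left, Complex.conj_conj]
  have haφ : ⟪(a : H), U φ⟫ = c * ⟪(a : H), φ⟫ := by rw [hUφ, inner_smul_right]
  have hμ : Complex.I * τ ≠ 0 := by simpa using hτ
  refine (mul_eq_zero.mp ?_).resolve_left hμ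
  rw [← hC]
  linear_combination ha' + hb' + hφb - haφ + c * hab

theorem inner_apply_self_eq_zero_of_apply_eq_smul (hA : IsSelfAdjoint A)
    (hC : HasCommutator A U U') (hUφ : U φ = c • φ) (hUstar : adjoint U φ = starRingEnd ℂ c • φ) :
    ⟪φ, U' φ⟫ = 0 := by
  have hsymm := hA.isFormalAdjoint
  set τ : ℕ → ℝ := fun n ↦ 1 / ((n : ℝ) + 1)
  have hτ0 : ∀ n, τ n ≠ 0 := fun n ↦ one_div_ne_zero (by positivity)
  have hτ : Tendsto τ atTop (𝓝 0) := tendsto_one_div_add_atTop_nhds_zero_nat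
  choose a ha using fun n ↦ hA.surjective_oneAddIMul (neg_ne_zero.mpr (hτ0 n)) φ
  choose b hb using fun n ↦ hA.surjective_oneAddIMul (hτ0 n) φ
  have hlim : Tendsto (fun n ↦ ⟪(a n : H), U' (b n)⟫) atTop (𝓝 ⟪φ, U' φ⟫) :=
    (hsymm.tendsto_of_oneAddIMul_eq hA.dense_domain (by simpa using hτ.neg) ha).inner
      ((U'.continuous.tendsto φ).comp (hsymm.tendsto_of_oneAddIMul_eq hA.dense_domain hτ hb))
  have hzero : ∀ n, ⟪(a n : H), U' (b n)⟫ = 0 := fun n ↦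
    hC.inner_eq_zero_of_oneAddIMul_eq hsymm hUφ hUstar (hτ0 n) (ha n) (hb n)
  simp only [hzero] at hlim
  exact tendsto_nhds_unique hlim tendsto_const_nhds

end HasCommutator

lemma ContinuousLinearMap.IsPositive.apply_eq_zero_of_inner_eq_zero {B : H →L[ℂ] H}
    (hB : B.IsPositive) {x : H} (hx : ⟪x, B x⟫ = 0) : B x = 0 := by
  have hB0 : 0 ≤ B := (nonneg_iff_isPositive B).mpr hB
  set S := CFC.sqrt B
  have hS : IsSelfAdjoint S := (CFC.sqrt_nonneg B).isSelfAdjoint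
  have hSx : S x = 0 := by
    rw [← norm_eq_zero, ← sq_eq_zero_iff, ← inner_self_eq_norm_sq (𝕜 := ℂ), ← adjoint_inner_right,
      hS.adjoint_eq, ← mul_apply_eq_comp, CFC.sqrt_mul_sqrt_self B, hx, RCLike.zero_re]
  rw [← CFC.sqrt_mul_sqrt_self B, mul_apply_eq_comp, hSx, map_zero]

lemma ContinuousLinearMap.adjoint_apply_eq_of_mem_unitary {U : H →L[ℂ] H}
    (hU : U ∈ unitary (H →L[ℂ] H)) {c : ℂ} {φ : H} (hφ : U φ = c • φ) :
    adjoint U φ = starRingEnd ℂ c • φ := by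
  rcases eq_or_ne φ 0 with rfl | hφ0
  · simp
  have hc : starRingEnd ℂ c * c = 1 := by
    have := norm_map_of_mem_unitary hU φ
    rw [hφ, norm_smul] at this
    rw [mul_comm, Complex.mul_conj, Complex.normSq_eq_norm_sq,
      (mul_eq_right₀ (norm_ne_zero_iff.mpr hφ0)).mp this]
    norm_num
  have hUU : adjoint U (U φ) = φ := by
    rw [← mul_apply_eq_comp, ← star_eq_adjoint, Unitary.star_mul_self_of_mem hU, one_apply_eq_self]
  calc adjoint U φ = adjoint U ((starRingEnd ℂ c * c) • φ) := by rw [hc, one_smul]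
    _ = starRingEnd ℂ c • φ := by rw [mul_smul, ← hφ, map_smul, hUU]

/-- If a unitary `U ∈ C¹(A)` is weakly propagating with respect to `A`,
i.e. `U*AU - A = U* ∘ ad_A(U)` is non-negative and injective, then `U` has no eigenvalues. -/
theorem weakly_propagating_no_point_spectrum
    (A : H →ₗ.[ℂ] H) (hA : IsSelfAdjoint A)
    (U U' : H →L[ℂ] H) (hU : IsUnitaryCLM U)
    (hC : HasCommutator A U U')
    (hpos : (adjoint U ∘L U').IsPositive)
    (hinj : Function.Injective (adjoint U ∘L U')) :
    ∀ (c : ℂ) (φ : H), φ ≠ 0 → U φ ≠ c • φ := by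
  intro c φ hφ hUφ
  have hUstar := adjoint_apply_eq_of_mem_unitary (show U ∈ unitary (H →L[ℂ] H) from hU) hUφ
  have hvirial := hC.inner_apply_self_eq_zero_of_apply_eq_smul hA hUφ hUstar
  have hB : ⟪φ, (adjoint U ∘L U') φ⟫ = 0 := by
    rw [comp_apply, adjoint_inner_right, hUφ, inner_smul_left, hvirial, mul_zero]
  exact hφ <| (injective_iff_map_eq_zero _).mp hinj φ (hpos.apply_eq_zero_of_inner_eq_zero hB)
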